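/- arXiv:2206.11424 — 3 statements merged into one kernel-verified Lean document; each statement's English description precedes it below -/
import Mathlib

section
/- Let f : ℝ → ℝ be twice continuously differentiable with f′ and f″ bounded on ℝ, and fix x ∈ ℝ. For σ > 0 let ε_σ be a Gaussian random variable with mean 0 and variance σ². Then lim_{σ→0⁺} σ^{−2} ( E[(x − f(x + ε_σ))²] − (x − f(x))² ) = f′(x)² − (x − f(x)) f″(x). -/
open MeasureTheory ProbabilityTheory Filter Real
open scoped NNReal ENNReal


private lemma abs_le_of_mem_uIcc {s t : ℝ} (ht : t ∈ Set.uIcc 0 s) : |t| ≤ |s| := by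
  rcases Set.mem_uIcc.mp ht with ⟨h1, h2⟩ | ⟨h1, h2⟩ <;>
    rw [abs_le] <;> constructor <;>
    [skip; skip; skip; skip] <;>
    nlinarith [neg_abs_le s, le_abs_self s, abs_nonneg s]

private lemma taylor2_bound {g g' g'' : ℝ → ℝ}
    (hg : ∀ t, HasDerivAt g (g' t) t) (hg' : ∀ t, HasDerivAt g' (g'' t) t)
    {K s : ℝ} (hK : ∀ t, |t| ≤ |s| → |g'' t| ≤ K) :
    |g s - g 0 - g' 0 * s| ≤ K * s ^ 2 := by
  have hK0 : 0 ≤ K := le_trans (abs_nonneg _) (hK 0 (by simp))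
  have conv : Convex ℝ (Set.uIcc (0:ℝ) s) := convex_uIcc _ _
  have h0mem : (0:ℝ) ∈ Set.uIcc (0:ℝ) s := Set.left_mem_uIcc
  have hsmem : s ∈ Set.uIcc (0:ℝ) s := Set.right_mem_uIcc
  have step1 : ∀ t ∈ Set.uIcc (0:ℝ) s, |g' t - g' 0| ≤ K * |s| := by
    intro t ht
    have h := Convex.norm_image_sub_le_of_norm_hasDerivWithin_le
      (fun u (_ : u ∈ Set.uIcc (0:ℝ) s) => (hg' u).hasDerivWithinAt)
      (fun u hu => hK u (abs_le_of_mem_uIcc hu)) conv h0mem ht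
    have : |g' t - g' 0| ≤ K * |t| := by simpa using h
    exact this.trans (by nlinarith [abs_le_of_mem_uIcc ht])
  have hd : ∀ t : ℝ, HasDerivAt (fun u => g u - g 0 - g' 0 * u) (g' t - g' 0) t := by
    intro t
    have := ((hg t).sub_const (g 0)).sub ((hasDerivAt_id t).const_mul (g' 0))
    exact this.congr_deriv (by ring)
  have h := Convex.norm_image_sub_le_of_norm_hasDerivWithin_le
    (fun u (_ : u ∈ Set.uIcc (0:ℝ) s) => (hd u).hasDerivWithinAt)
    (fun u hu => by simpa using step1 u hu) conv h0mem hsmem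
  have h2 : |g s - g 0 - g' 0 * s| ≤ K * |s| * |s| := by simpa using h
  calc |g s - g 0 - g' 0 * s| ≤ K * |s| * |s| := h2
    _ = K * s ^ 2 := by rw [mul_assoc, abs_mul_abs_self]; ring

private lemma taylor2_tendsto {g g' g'' : ℝ → ℝ}
    (hg : ∀ t, HasDerivAt g (g' t) t) (hg' : ∀ t, HasDerivAt g' (g'' t) t)
    (hcont : Continuous g'') :
    Tendsto (fun s => (g s - g 0 - g' 0 * s) / s ^ 2) (nhdsWithin 0 {(0:ℝ)}ᶜ)
      (nhds (g'' 0 / 2)) := by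
  rw [Metric.tendsto_nhdsWithin_nhds]
  intro ε hε
  obtain ⟨δ, hδ, hδ'⟩ := Metric.continuousAt_iff.mp hcont.continuousAt (ε/2) (by linarith)
  refine ⟨δ, hδ, ?_⟩
  intro s hs hsδ
  have hs0 : s ≠ 0 := hs
  have hr1 : ∀ t : ℝ, HasDerivAt (fun u => g u - g 0 - g' 0 * u - g'' 0 * u ^ 2 / 2)
      (g' t - g' 0 - g'' 0 * t) t := by
    intro t
    have h1 := (((hg t).sub_const (g 0)).sub ((hasDerivAt_id t).const_mul (g' 0))).sub
      (((hasDerivAt_pow 2 t).const_mul (g'' 0)).div_const 2)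
    refine h1.congr_deriv ?_
    push_cast
    ring
  have hr2 : ∀ t : ℝ, HasDerivAt (fun u => g' u - g' 0 - g'' 0 * u) (g'' t - g'' 0) t := by
    intro t
    have h1 := ((hg' t).sub_const (g' 0)).sub ((hasDerivAt_id t).const_mul (g'' 0))
    refine h1.congr_deriv ?_
    ring
  have hb := taylor2_bound hr1 hr2 (K := ε/2) (s := s) (fun t ht => by
    rw [Real.dist_eq, sub_zero] at hsδ
    have h2 : dist t 0 < δ := by rw [Real.dist_eq, sub_zero]; exact lt_of_le_of_lt ht hsδ
    have := hδ' h2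
    rw [Real.dist_eq] at this
    exact le_of_lt this)
  have hb' : |g s - g 0 - g' 0 * s - g'' 0 * s ^ 2 / 2| ≤ ε / 2 * s ^ 2 := by
    calc |g s - g 0 - g' 0 * s - g'' 0 * s ^ 2 / 2|
        = |g s - g 0 - g' 0 * s - g'' 0 * s ^ 2 / 2 - (g 0 - g 0 - g' 0 * 0 - g'' 0 * 0 ^ 2 / 2)
          - (g' 0 - g' 0 - g'' 0 * 0) * s| := by norm_num
      _ ≤ ε / 2 * s ^ 2 := hb
  rw [Real.dist_eq]
  have hs2 : (0:ℝ) < s ^ 2 := by positivity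
  have key : (g s - g 0 - g' 0 * s) / s ^ 2 - g'' 0 / 2
      = (g s - g 0 - g' 0 * s - g'' 0 * s ^ 2 / 2) / s ^ 2 := by
    field_simp
  rw [key, abs_div, abs_of_pos hs2, div_lt_iff₀ hs2]
  calc |g s - g 0 - g' 0 * s - g'' 0 * s ^ 2 / 2| ≤ ε/2 * s ^ 2 := hb'
    _ < ε * s ^ 2 := by nlinarith

private lemma gauss_pdf_eq (z : ℝ) :
    gaussianPDFReal 0 1 z = (Real.sqrt (2 * π))⁻¹ * Real.exp (-(1/2) * z ^ 2) := by
  simp only [gaussianPDFReal, NNReal.coe_one, mul_one, sub_zero]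
  congr 1
  ring

private lemma gauss_integral_eq (h : ℝ → ℝ) :
    ∫ z, h z ∂gaussianReal 0 1
      = ∫ z, gaussianPDFReal 0 1 z * h z := by
  rw [gaussianReal_of_var_ne_zero _ one_ne_zero]
  have hd : (volume.withDensity (gaussianPDF 0 1))
      = volume.withDensity (fun z => ((Real.toNNReal (gaussianPDFReal 0 1 z) : ℝ≥0) : ℝ≥0∞)) :=
    rfl
  rw [hd, integral_withDensity_eq_integral_smul
    ((measurable_gaussianPDFReal 0 1).real_toNNReal) h]
  congr 1
  funext z
  rw [NNReal.smul_def, smul_eq_mul, Real.coe_toNNReal _ (gaussianPDFReal_nonneg _ _ _)]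

private lemma gauss_integrable (h : ℝ → ℝ)
    (hint : Integrable (fun z => gaussianPDFReal 0 1 z * h z) volume) :
    Integrable h (gaussianReal 0 1) := by
  rw [gaussianReal_of_var_ne_zero _ one_ne_zero]
  have hd : (volume.withDensity (gaussianPDF 0 1))
      = volume.withDensity (fun z => ((Real.toNNReal (gaussianPDFReal 0 1 z) : ℝ≥0) : ℝ≥0∞)) :=
    rfl
  rw [hd, integrable_withDensity_iff_integrable_smul
    ((measurable_gaussianPDFReal 0 1).real_toNNReal)]
  apply hint.congr
  filter_upwards with z
  rw [NNReal.smul_def, smul_eq_mul, Real.coe_toNNReal _ (gaussianPDFReal_nonneg _ _ _)]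

private lemma integrable_abs_pow_exp (n : ℕ) :
    Integrable (fun z : ℝ => |z| ^ n * Real.exp (-(1/2) * z ^ 2)) volume := by
  have h := (integrable_rpow_mul_exp_neg_mul_sq (b := 1/2) (by norm_num)
    (s := (n : ℝ)) (lt_of_lt_of_le (by norm_num) (Nat.cast_nonneg n))).abs
  apply h.congr
  filter_upwards with z
  rw [abs_mul, Real.rpow_natCast, abs_pow, Real.abs_exp]

private lemma gauss_integrable_abs_pow (n : ℕ) :
    Integrable (fun z : ℝ => |z| ^ n) (gaussianReal 0 1) := by
  apply gauss_integrable
  have := (integrable_abs_pow_exp n).const_mul (Real.sqrt (2 * π))⁻¹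
  apply this.congr
  filter_upwards with z
  rw [gauss_pdf_eq]
  ring

private lemma integral_exp_half : ∫ z : ℝ, Real.exp (-(1/2) * z ^ 2) = Real.sqrt (2 * π) := by
  rw [integral_gaussian]
  congr 1
  rw [div_div_eq_mul_div]
  ring

private lemma integral_mul_exp_half : ∫ z : ℝ, z * Real.exp (-(1/2) * z ^ 2) = 0 := by
  have h := integral_neg_eq_self (fun z : ℝ => z * Real.exp (-(1/2) * z ^ 2)) volume
  simp only [neg_sq, neg_mul] at h
  rw [integral_neg] at h
  simp only [neg_mul]
  linarith

private lemma integral_sq_exp_half :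
    ∫ z : ℝ, z ^ 2 * Real.exp (-(1/2) * z ^ 2) = Real.sqrt (2 * π) := by
  have h12 : (0:ℝ) < 1/2 := by norm_num
  have hu : ∀ z : ℝ, HasDerivAt (fun y : ℝ => y) 1 z := fun z => hasDerivAt_id z
  have hv : ∀ z : ℝ, HasDerivAt (fun y : ℝ => -Real.exp (-(1/2) * y ^ 2))
      (z * Real.exp (-(1/2) * z ^ 2)) z := by
    intro z
    have h1 : HasDerivAt (fun y : ℝ => -(1/2) * y ^ 2) (-(1/2) * (2 * z ^ 1)) z := by
      simpa using (hasDerivAt_pow 2 z).const_mul (-(1/2) : ℝ)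
    have h2 := (h1.exp).neg
    refine h2.congr_deriv ?_
    ring
  have Isq : Integrable (fun z : ℝ => z ^ 2 * Real.exp (-(1/2) * z ^ 2)) := by
    apply (integrable_abs_pow_exp 2).congr
    filter_upwards with z
    rw [sq_abs]
  have Iuv' : Integrable ((fun y : ℝ => y) * fun z : ℝ => z * Real.exp (-(1/2) * z ^ 2)) := by
    apply Isq.congr
    filter_upwards with z
    simp only [Pi.mul_apply]
    ring
  have Iu'v : Integrable ((fun _ : ℝ => (1:ℝ)) * fun z : ℝ => -Real.exp (-(1/2) * z ^ 2)) := by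
    have := (integrable_exp_neg_mul_sq h12).neg
    apply this.congr
    filter_upwards with z
    simp [Pi.mul_apply]
  have Iuv : Integrable ((fun y : ℝ => y) * fun z : ℝ => -Real.exp (-(1/2) * z ^ 2)) := by
    have := (integrable_mul_exp_neg_mul_sq h12).neg
    apply this.congr
    filter_upwards with z
    simp only [Pi.mul_apply, Pi.neg_apply]
    ring
  have h := integral_mul_deriv_eq_deriv_mul_of_integrable (fun z _ => hu z) (fun z _ => hv z) Iuv' Iu'v Iuv
  have h1 : ∫ z : ℝ, z * (z * Real.exp (-(1/2) * z ^ 2))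
      = ∫ z : ℝ, z ^ 2 * Real.exp (-(1/2) * z ^ 2) := by
    congr 1; funext z; ring
  have h2 : ∫ z : ℝ, (1:ℝ) * -Real.exp (-(1/2) * z ^ 2)
      = -∫ z : ℝ, Real.exp (-(1/2) * z ^ 2) := by
    rw [← integral_neg]; congr 1; funext z; ring
  rw [h1, h2] at h
  rw [h, integral_exp_half, neg_neg]

private lemma gauss_moment_one : ∫ z : ℝ, z ∂gaussianReal 0 1 = 0 := by
  rw [gauss_integral_eq]
  have : (fun z : ℝ => gaussianPDFReal 0 1 z * z)
      = fun z : ℝ => (Real.sqrt (2 * π))⁻¹ * (z * Real.exp (-(1/2) * z ^ 2)) := by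
    funext z; rw [gauss_pdf_eq]; ring
  rw [this, integral_const_mul, integral_mul_exp_half, mul_zero]

private lemma gauss_moment_two : ∫ z : ℝ, z ^ 2 ∂gaussianReal 0 1 = 1 := by
  rw [gauss_integral_eq]
  have : (fun z : ℝ => gaussianPDFReal 0 1 z * z ^ 2)
      = fun z : ℝ => (Real.sqrt (2 * π))⁻¹ * (z ^ 2 * Real.exp (-(1/2) * z ^ 2)) := by
    funext z; rw [gauss_pdf_eq]; ring
  rw [this, integral_const_mul, integral_sq_exp_half]
  rw [inv_mul_cancel₀]
  positivity

private lemma gauss_cov (σ : ℝ) (h : ℝ → ℝ)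
    (hm : AEStronglyMeasurable h (gaussianReal 0 ⟨σ ^ 2, sq_nonneg σ⟩)) :
    ∫ ε, h ε ∂gaussianReal 0 ⟨σ ^ 2, sq_nonneg σ⟩
      = ∫ z, h (σ * z) ∂gaussianReal 0 1 := by
  have hmap := gaussianReal_map_const_mul (μ := 0) (v := 1) σ
  have hv : gaussianReal (σ * 0) (NNReal.mk (σ ^ 2) (sq_nonneg σ) * 1) = gaussianReal 0 ⟨σ ^ 2, sq_nonneg σ⟩ := by
    rw [mul_zero, mul_one]
    rfl
  rw [← hv, ← hmap, integral_map (by fun_prop) (by rwa [hmap, hv])]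

/-- For a `C²` function `f : ℝ → ℝ` with bounded first and second derivatives and Gaussian
noise `ε_σ ~ N(0, σ²)`, the normalized excess expected reconstruction loss
`σ⁻² (E[(x − f(x+ε_σ))²] − (x − f(x))²)` converges, as `σ → 0⁺`, to
`f′(x)² − (x − f(x)) f″(x)`. -/
theorem corrupted_loss_roughness_penalty_limit_1d
    (f : ℝ → ℝ) (hf : ContDiff ℝ 2 f)
    (C₁ C₂ : ℝ)
    (hb1 : ∀ t : ℝ, |deriv f t| ≤ C₁)
    (hb2 : ∀ t : ℝ, |deriv (deriv f) t| ≤ C₂)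
    (x : ℝ) :
    Tendsto
      (fun σ : ℝ =>
        (σ ^ 2)⁻¹ *
          ((∫ ε : ℝ, (x - f (x + ε)) ^ 2 ∂gaussianReal 0 ⟨σ ^ 2, sq_nonneg σ⟩)
            - (x - f x) ^ 2))
      (nhdsWithin 0 (Set.Ioi 0))
      (nhds (deriv f x ^ 2 - (x - f x) * deriv (deriv f) x)) := by
  have hC₁ : 0 ≤ C₁ := le_trans (abs_nonneg _) (hb1 0)
  have hC₂ : 0 ≤ C₂ := le_trans (abs_nonneg _) (hb2 0)
  have hdiff : Differentiable ℝ f := hf.differentiable (by norm_num)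
  have hcf : Continuous f := hdiff.continuous
  have hf' : ContDiff ℝ 1 (deriv f) := by
    have h2 : ContDiff ℝ (1 + 1) f := by rwa [one_add_one_eq_two]
    exact (contDiff_succ_iff_deriv.mp h2).2.2
  have hdiff' : Differentiable ℝ (deriv f) := hf'.differentiable one_ne_zero
  have hcf' : Continuous (deriv f) := hdiff'.continuous
  have hcont'' : Continuous (deriv (deriv f)) := by
    have h1 : ContDiff ℝ (0 + 1) (deriv f) := by rwa [zero_add]
    exact ((contDiff_succ_iff_deriv.mp h1).2.2).continuous
  -- the loss and its derivatives
  set g0 : ℝ → ℝ := fun t => (x - f (x + t)) ^ 2 with hg0def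
  set g1 : ℝ → ℝ := fun t => -2 * ((x - f (x + t)) * deriv f (x + t)) with hg1def
  set g2 : ℝ → ℝ := fun t =>
    2 * deriv f (x + t) ^ 2 - 2 * ((x - f (x + t)) * deriv (deriv f) (x + t)) with hg2def
  have hadd : ∀ t : ℝ, HasDerivAt (fun t : ℝ => x + t) 1 t := fun t => by
    simpa using (hasDerivAt_id t).const_add x
  have hInner : ∀ t : ℝ, HasDerivAt (fun t => x - f (x + t)) (-(deriv f (x + t))) t := by
    intro t
    have h2 : HasDerivAt (fun t : ℝ => f (x + t)) (deriv f (x + t) * 1) t :=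
      (hdiff (x + t)).hasDerivAt.comp t (hadd t)
    simpa using h2.const_sub x
  have hg01 : ∀ t, HasDerivAt g0 (g1 t) t := by
    intro t
    have := (hInner t).pow 2
    refine this.congr_deriv ?_
    simp [hg1def]
    ring
  have hf'deriv : ∀ t : ℝ, HasDerivAt (fun t : ℝ => deriv f (x + t))
      (deriv (deriv f) (x + t)) t := by
    intro t
    exact ((hdiff' (x + t)).hasDerivAt.comp t (hadd t)).congr_deriv (by ring)
  have hg12 : ∀ t, HasDerivAt g1 (g2 t) t := by
    intro t
    have hprod := (hInner t).mul (hf'deriv t)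
    have := hprod.const_mul (-2 : ℝ)
    refine this.congr_deriv ?_
    simp [hg2def]
    ring
  have hcg2 : Continuous g2 := by
    rw [hg2def]
    fun_prop
  -- Lipschitz bound on f
  have hLip : ∀ t : ℝ, |f (x + t) - f x| ≤ C₁ * |t| := by
    intro t
    have h := Convex.norm_image_sub_le_of_norm_hasDerivWithin_le (s := Set.univ)
      (f := f) (f' := deriv f)
      (fun u _ => (hdiff u).hasDerivAt.hasDerivWithinAt)
      (fun u _ => hb1 u) convex_univ (Set.mem_univ x) (Set.mem_univ (x + t))
    simpa using h
  set A : ℝ := 2 * C₁ ^ 2 + 2 * (|x - f x| * C₂) with hAdef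
  set B : ℝ := 2 * (C₁ * C₂) with hBdef
  have hA : 0 ≤ A := by positivity
  have hB : 0 ≤ B := by positivity
  have hg2bound : ∀ t : ℝ, |g2 t| ≤ A + B * |t| := by
    intro t
    have h1 : |x - f (x + t)| ≤ |x - f x| + C₁ * |t| := by
      have : x - f (x + t) = (x - f x) - (f (x + t) - f x) := by ring
      rw [this]
      exact (abs_sub _ _).trans (by gcongr; exact hLip t)
    have h2 : |deriv f (x + t)| ≤ C₁ := hb1 _
    have h3 : |deriv (deriv f) (x + t)| ≤ C₂ := hb2 _
    have h4 : |g2 t| ≤ 2 * |deriv f (x + t)| ^ 2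
        + 2 * (|x - f (x + t)| * |deriv (deriv f) (x + t)|) := by
      rw [hg2def]
      calc |2 * deriv f (x + t) ^ 2 - 2 * ((x - f (x + t)) * deriv (deriv f) (x + t))|
          ≤ |2 * deriv f (x + t) ^ 2| + |2 * ((x - f (x + t)) * deriv (deriv f) (x + t))| :=
            abs_sub _ _
        _ = 2 * |deriv f (x + t)| ^ 2
            + 2 * (|x - f (x + t)| * |deriv (deriv f) (x + t)|) := by
            rw [abs_mul, abs_mul, abs_mul, abs_pow]
            norm_num
    rw [hAdef, hBdef]
    nlinarith [abs_nonneg (x - f (x + t)), abs_nonneg (deriv (deriv f) (x + t)),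
      abs_nonneg (deriv f (x + t)), abs_nonneg t, abs_nonneg (x - f x)]
  -- Taylor bound
  have hTay : ∀ s : ℝ, |g0 s - g0 0 - g1 0 * s| ≤ (A + B * |s|) * s ^ 2 := by
    intro s
    refine taylor2_bound hg01 hg12 (fun t ht => (hg2bound t).trans ?_)
    nlinarith [abs_nonneg t]
  set γ : Measure ℝ := gaussianReal 0 1 with hγ
  set W : ℝ → ℝ := fun z => A * |z| ^ 2 + B * |z| ^ 3 with hWdef
  have hWint : Integrable W γ :=
    ((gauss_integrable_abs_pow 2).const_mul A).add ((gauss_integrable_abs_pow 3).const_mul B)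
  set φ : ℝ → ℝ → ℝ := fun σ z => (σ ^ 2)⁻¹ * (g0 (σ * z) - g0 0 - g1 0 * (σ * z)) with hφdef
  have hφcont : ∀ σ : ℝ, Continuous (φ σ) := by
    intro σ
    apply continuous_const.mul
    apply Continuous.sub
    · apply Continuous.sub
      · rw [hg0def]
        fun_prop
      · exact continuous_const
    · exact continuous_const.mul (continuous_const.mul continuous_id)
  have hmain : Tendsto (fun σ => ∫ z, φ σ z ∂γ) (nhdsWithin 0 (Set.Ioi 0))
      (nhds (∫ z, g2 0 / 2 * z ^ 2 ∂γ)) := by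
    apply tendsto_integral_filter_of_dominated_convergence W
    · filter_upwards with σ
      exact (hφcont σ).aestronglyMeasurable
    · filter_upwards [Ioc_mem_nhdsGT (one_pos : (0:ℝ) < 1)] with σ hσ
      apply ae_of_all
      intro z
      have hσ0 : 0 < σ := hσ.1
      have hσ1 : σ ≤ 1 := hσ.2
      have h1 := hTay (σ * z)
      have e0 : ‖φ σ z‖ = (σ ^ 2)⁻¹ * |g0 (σ * z) - g0 0 - g1 0 * (σ * z)| := by
        rw [Real.norm_eq_abs, hφdef]
        simp only []
        rw [abs_mul, abs_of_pos (by positivity : (0:ℝ) < (σ ^ 2)⁻¹)]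
      rw [e0]
      have e1 : (σ ^ 2)⁻¹ * ((A + B * |σ * z|) * (σ * z) ^ 2)
          = A * |z| ^ 2 + B * σ * |z| ^ 3 := by
        have h5 : (σ ^ 2)⁻¹ * ((A + B * |σ * z|) * (σ * z) ^ 2)
            = A * z ^ 2 + B * σ * (|z| * z ^ 2) := by
          rw [abs_mul, abs_of_pos hσ0, mul_pow]
          field_simp
        rw [h5, ← sq_abs z]
        ring
      calc (σ ^ 2)⁻¹ * |g0 (σ * z) - g0 0 - g1 0 * (σ * z)|
          ≤ (σ ^ 2)⁻¹ * ((A + B * |σ * z|) * (σ * z) ^ 2) := by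
            apply mul_le_mul_of_nonneg_left h1 (by positivity)
        _ = A * |z| ^ 2 + B * σ * |z| ^ 3 := e1
        _ ≤ W z := by
            rw [hWdef]
            have : B * σ * |z| ^ 3 ≤ B * |z| ^ 3 := by
              apply mul_le_mul_of_nonneg_right _ (by positivity)
              nlinarith
            simp only []
            linarith
    · exact hWint
    · apply ae_of_all
      intro z
      by_cases hz : z = 0
      · subst hz
        have : (fun σ => φ σ 0) = fun _ => (0:ℝ) := by
          funext σ
          rw [hφdef]
          simp
        rw [this]
        simpa using tendsto_const_nhds
      · have hψ := taylor2_tendsto hg01 hg12 hcg2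
        have hcomp : Tendsto (fun σ => σ * z) (nhdsWithin 0 (Set.Ioi 0))
            (nhdsWithin 0 {(0:ℝ)}ᶜ) := by
          apply tendsto_nhdsWithin_of_tendsto_nhds_of_eventually_within
          · have : Tendsto (fun σ : ℝ => σ * z) (nhds 0) (nhds 0) := by
              have := (continuous_mul_right z).tendsto (0:ℝ)
              simpa using this
            exact this.mono_left nhdsWithin_le_nhds
          · filter_upwards [self_mem_nhdsWithin] with σ hσ
            exact mul_ne_zero (ne_of_gt hσ) hz
        have h2 : Tendsto (fun σ => z ^ 2 * ((g0 (σ * z) - g0 0 - g1 0 * (σ * z)) / (σ * z) ^ 2))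
            (nhdsWithin 0 (Set.Ioi 0)) (nhds (g2 0 / 2 * z ^ 2)) := by
          have h3 := (hψ.comp hcomp).const_mul (z ^ 2)
          rw [mul_comm]
          exact h3
        apply Tendsto.congr' _ h2
        filter_upwards [self_mem_nhdsWithin] with σ hσ
        have hσ0 : (σ:ℝ) ≠ 0 := ne_of_gt hσ
        rw [hφdef]
        show z ^ 2 * ((g0 (σ * z) - g0 0 - g1 0 * (σ * z)) / (σ * z) ^ 2)
            = (σ ^ 2)⁻¹ * (g0 (σ * z) - g0 0 - g1 0 * (σ * z))
        rw [mul_pow]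
        field_simp
  -- value of the limit integral
  have hg0c : Continuous g0 := by
    rw [hg0def]
    fun_prop
  have hγint2 : ∫ z, g2 0 / 2 * z ^ 2 ∂γ = g2 0 / 2 := by
    rw [integral_const_mul, hγ, gauss_moment_two, mul_one]
  have hval : g2 0 / 2 = deriv f x ^ 2 - (x - f x) * deriv (deriv f) x := by
    rw [hg2def]
    show (2 * deriv f (x + 0) ^ 2 - 2 * ((x - f (x + 0)) * deriv (deriv f) (x + 0))) / 2
      = deriv f x ^ 2 - (x - f x) * deriv (deriv f) x
    rw [add_zero]
    ring
  rw [← hval, ← hγint2]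
  apply Tendsto.congr' _ hmain
  filter_upwards [self_mem_nhdsWithin] with σ hσ
  have hσ0 : (0:ℝ) < σ := hσ
  have hσne : (σ:ℝ) ≠ 0 := ne_of_gt hσ0
  -- change of variables
  have hcov : ∫ ε, (x - f (x + ε)) ^ 2 ∂gaussianReal 0 ⟨σ ^ 2, sq_nonneg σ⟩
      = ∫ z, g0 (σ * z) ∂γ := by
    rw [hγ]
    exact gauss_cov σ g0 hg0c.aestronglyMeasurable
  -- integrability facts
  have hidint : Integrable (fun z : ℝ => z) γ := by
    apply (gauss_integrable_abs_pow 1).mono' aestronglyMeasurable_id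
    apply ae_of_all
    intro z
    simp [Real.norm_eq_abs]
  have hψint : Integrable (fun z => g0 (σ * z) - g0 0 - g1 0 * (σ * z)) γ := by
    apply Integrable.mono' (((gauss_integrable_abs_pow 2).const_mul (A * |σ| ^ 2)).add
      ((gauss_integrable_abs_pow 3).const_mul (B * |σ| ^ 3)))
    · apply Continuous.aestronglyMeasurable
      apply Continuous.sub
      · apply Continuous.sub
        · exact hg0c.comp (continuous_const.mul continuous_id)
        · exact continuous_const
      · exact continuous_const.mul (continuous_const.mul continuous_id)
    · apply ae_of_all
      intro z
      rw [Real.norm_eq_abs]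
      refine (hTay (σ * z)).trans (le_of_eq ?_)
      rw [show (A + B * |σ * z|) * (σ * z) ^ 2
          = A * (σ * z) ^ 2 + B * (|σ * z| * (σ * z) ^ 2) from by ring,
        ← sq_abs (σ * z), abs_mul]
      simp only [Pi.add_apply]
      ring
  have hlinint : Integrable (fun z : ℝ => g0 0 + g1 0 * σ * z) γ :=
    (integrable_const _).add (hidint.const_mul _)
  have hint1 : Integrable (fun z : ℝ => g0 (σ * z)) γ := by
    have he : (fun z : ℝ => g0 (σ * z))
        = fun z => (g0 (σ * z) - g0 0 - g1 0 * (σ * z)) + (g0 0 + g1 0 * σ * z) := by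
      funext z
      ring
    rw [he]
    exact hψint.add hlinint
  -- computing the integral of φ σ
  have hψeq : (fun z : ℝ => g0 (σ * z) - g0 0 - g1 0 * (σ * z))
      = fun z : ℝ => g0 (σ * z) - (g0 0 + g1 0 * σ * z) := by
    funext z
    ring
  have hIψ : ∫ z, (g0 (σ * z) - g0 0 - g1 0 * (σ * z)) ∂γ
      = (∫ z, g0 (σ * z) ∂γ) - g0 0 := by
    rw [hψeq, integral_sub hint1 hlinint, integral_add (integrable_const _) (hidint.const_mul _),
      integral_const_mul, hγ, gauss_moment_one, mul_zero, add_zero, integral_const]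
    simp
  have hg00 : (x - f x) ^ 2 = g0 0 := by
    rw [hg0def]
    show (x - f x) ^ 2 = (x - f (x + 0)) ^ 2
    rw [add_zero]
  calc ∫ z, φ σ z ∂γ
      = (σ ^ 2)⁻¹ * ∫ z, (g0 (σ * z) - g0 0 - g1 0 * (σ * z)) ∂γ := by
        rw [hφdef]
        exact integral_const_mul _ _
    _ = (σ ^ 2)⁻¹ * ((∫ ε, (x - f (x + ε)) ^ 2 ∂gaussianReal 0 ⟨σ ^ 2, sq_nonneg σ⟩)
          - (x - f x) ^ 2) := by
        rw [hIψ, hcov, hg00]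
end

section
/- Let g : ℝ → ℝ be L-Lipschitz with g(0) = 0, and let G denote its coordinatewise application to vectors. Let W be a real L'×D matrix, U a real L'×L' matrix, and x_1, …, x_J ∈ ℝ^D. Define the hidden states h_0 = 0 and h_k = G(W x_k + U h_{k−1}) for k = 1, …, J. Then for every 1 ≤ j ≤ J, ‖h_j‖ ≤ L ‖W‖_op Σ_{k=1}^{j} (L ‖U‖_op)^{j−k} ‖x_k‖. -/
/-!
Since `g(0) = 0`, applying `g` coordinatewise is `L`-Lipschitz on Euclidean space and fixes `0`, so
`‖h_{k+1}‖ ≤ L ‖W‖ ‖x_{k+1}‖ + L ‖U‖ ‖h_k‖`; unrolling this linear recursive inequality from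
`h_0 = 0` gives the geometric-weighted sum.
-/

open scoped NNReal

theorem PiLp.norm_le_mul_of_forall_norm_le {ι : Type*} [Fintype ι] {β γ : ι → Type*}
    [∀ i, SeminormedAddCommGroup (β i)] [∀ i, SeminormedAddCommGroup (γ i)]
    (x : PiLp 2 β) (y : PiLp 2 γ) {C : ℝ} (hC : 0 ≤ C) (hxy : ∀ i, ‖x i‖ ≤ C * ‖y i‖) :
    ‖x‖ ≤ C * ‖y‖ := by
  refine le_of_pow_le_pow_left₀ two_ne_zero (by positivity) ?_
  rw [mul_pow, PiLp.norm_sq_eq_of_L2, PiLp.norm_sq_eq_of_L2, Finset.mul_sum]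
  gcongr with i
  calc ‖x i‖ ^ 2 ≤ (C * ‖y i‖) ^ 2 := by gcongr; exact hxy i
    _ = C ^ 2 * ‖y i‖ ^ 2 := mul_pow _ _ _

theorem LipschitzWith.norm_le_mul_of_coordwise {ι : Type*} [Fintype ι] {L : ℝ≥0} {g : ℝ → ℝ}
    (hg : LipschitzWith L g) (hg0 : g 0 = 0) {a b : EuclideanSpace ℝ ι}
    (hab : ∀ i, b i = g (a i)) : ‖b‖ ≤ L * ‖a‖ :=
  PiLp.norm_le_mul_of_forall_norm_le b a L.coe_nonneg fun i => hab i ▸ hg.norm_le_mul hg0 (a i)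

theorem le_sum_pow_mul_of_le_add_mul {a b : ℕ → ℝ} {c : ℝ} (hc : 0 ≤ c) (ha0 : a 0 ≤ 0)
    (hab : ∀ k, a (k + 1) ≤ b (k + 1) + c * a k) (j : ℕ) :
    a j ≤ ∑ k ∈ Finset.Icc 1 j, c ^ (j - k) * b k := by
  induction j with
  | zero => simpa using ha0
  | succ n ih =>
    have hshift : ∑ k ∈ Finset.Icc 1 n, c ^ (n + 1 - k) * b k
        = c * ∑ k ∈ Finset.Icc 1 n, c ^ (n - k) * b k := by
      rw [Finset.mul_sum]
      refine Finset.sum_congr rfl fun k hk => ?_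
      rw [Nat.sub_add_comm (Finset.mem_Icc.mp hk).2, pow_succ]
      ring
    calc a (n + 1) ≤ b (n + 1) + c * a n := hab n
      _ ≤ b (n + 1) + c * ∑ k ∈ Finset.Icc 1 n, c ^ (n - k) * b k := by gcongr
      _ = ∑ k ∈ Finset.Icc 1 (n + 1), c ^ (n + 1 - k) * b k := by
        rw [Finset.sum_Icc_succ_top (Nat.le_add_left 1 n), hshift, Nat.sub_self, pow_zero,
          one_mul, add_comm]

theorem rnn_hidden_state_growth_bound_general
    (L : ℝ≥0) (g : ℝ → ℝ) (hg : LipschitzWith L g) (hg0 : g 0 = 0)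
    (L' D : ℕ)
    (W : Matrix (Fin L') (Fin D) ℝ) (U : Matrix (Fin L') (Fin L') ℝ)
    (x : ℕ → EuclideanSpace ℝ (Fin D))
    (h : ℕ → EuclideanSpace ℝ (Fin L'))
    (h0 : h 0 = 0)
    (hrec : ∀ k i, h (k + 1) i =
      g ((Matrix.toEuclideanLin W (x (k + 1)) + Matrix.toEuclideanLin U (h k)) i))
    (j : ℕ) :
    ‖h j‖ ≤ (L : ℝ) * ‖LinearMap.toContinuousLinearMap (Matrix.toEuclideanLin W)‖ *
      ∑ k ∈ Finset.Icc 1 j,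
        ((L : ℝ) * ‖LinearMap.toContinuousLinearMap (Matrix.toEuclideanLin U)‖) ^ (j - k)
          * ‖x k‖ := by
  set W' := LinearMap.toContinuousLinearMap (Matrix.toEuclideanLin W)
  set U' := LinearMap.toContinuousLinearMap (Matrix.toEuclideanLin U)
  have hstep : ∀ k, ‖h (k + 1)‖ ≤ L * ‖W'‖ * ‖x (k + 1)‖ + L * ‖U'‖ * ‖h k‖ := fun k =>
    calc ‖h (k + 1)‖ ≤ L * ‖W' (x (k + 1)) + U' (h k)‖ :=
          hg.norm_le_mul_of_coordwise hg0 (hrec k)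
      _ ≤ L * (‖W'‖ * ‖x (k + 1)‖ + ‖U'‖ * ‖h k‖) := by
          gcongr
          exact (norm_add_le _ _).trans (add_le_add (W'.le_opNorm _) (U'.le_opNorm _))
      _ = L * ‖W'‖ * ‖x (k + 1)‖ + L * ‖U'‖ * ‖h k‖ := by ring
  calc ‖h j‖ ≤ ∑ k ∈ Finset.Icc 1 j, (L * ‖U'‖) ^ (j - k) * (L * ‖W'‖ * ‖x k‖) :=
        le_sum_pow_mul_of_le_add_mul (a := fun k => ‖h k‖) (by positivity) (by simp [h0]) hstep j
    _ = L * ‖W'‖ * ∑ k ∈ Finset.Icc 1 j, (L * ‖U'‖) ^ (j - k) * ‖x k‖ := by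
        rw [Finset.mul_sum]
        exact Finset.sum_congr rfl fun k _ => by ring

/-- Growth bound on RNN hidden states: with an `L`-Lipschitz activation `g` satisfying
`g(0) = 0`, the hidden states `h_k = G(W x_k + U h_{k−1})`, `h_0 = 0`, satisfy
`‖h_j‖ ≤ L ‖W‖_op Σ_{k=1}^{j} (L ‖U‖_op)^{j−k} ‖x_k‖` (Euclidean / operator norms). -/
theorem rnn_hidden_state_growth_bound
    (L : ℝ≥0) (g : ℝ → ℝ) (hg : LipschitzWith L g) (hg0 : g 0 = 0)
    (L' D J : ℕ)
    (W : Matrix (Fin L') (Fin D) ℝ) (U : Matrix (Fin L') (Fin L') ℝ)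
    (x : ℕ → EuclideanSpace ℝ (Fin D))
    (h : ℕ → EuclideanSpace ℝ (Fin L'))
    (h0 : h 0 = 0)
    (hrec : ∀ k i, h (k + 1) i =
      g ((Matrix.toEuclideanLin W (x (k + 1)) + Matrix.toEuclideanLin U (h k)) i))
    (j : ℕ) (hj1 : 1 ≤ j) (hjJ : j ≤ J) :
    ‖h j‖ ≤ (L : ℝ) * ‖LinearMap.toContinuousLinearMap (Matrix.toEuclideanLin W)‖ *
      ∑ k ∈ Finset.Icc 1 j,
        ((L : ℝ) * ‖LinearMap.toContinuousLinearMap (Matrix.toEuclideanLin U)‖) ^ (j - k)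
          * ‖x k‖ :=
  rnn_hidden_state_growth_bound_general L g hg hg0 L' D W U x h h0 hrec j
end

section
/- Let g : ℝ → ℝ be L-Lipschitz with g(0) = 0 and let G denote its coordinatewise application to vectors. Let W, ΔW be real L'×D matrices, U, ΔU real L'×L' matrices, and x_1, …, x_J ∈ ℝ^D. Define h_0 = h′_0 = 0, h_k = G(W x_k + U h_{k−1}), and h′_k = G((W+ΔW) x_k + (U+ΔU) h′_{k−1}) for k = 1, …, J. Then for every 1 ≤ j ≤ J, ‖h′_j − h_j‖ ≤ L Σ_{k=1}^{j} (L ‖U+ΔU‖_op)^{j−k} ( ‖ΔW‖_op ‖x_k‖ + ‖ΔU‖_op ‖h_{k−1}‖ ). -/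
/-!
Subtracting the two recurrences, the pre-activations differ by
`ΔW x_k + (U + ΔU)(h′_{k-1} - h_{k-1}) + ΔU h_{k-1}`, and the coordinatewise activation
multiplies Euclidean distances by at most `L`. This gives the one-step estimate
`e_k ≤ L ‖U + ΔU‖ e_{k-1} + L (‖ΔW‖ ‖x_k‖ + ‖ΔU‖ ‖h_{k-1}‖)` for `e_k = ‖h′_k - h_k‖`,
and unrolling it from `e_0 = 0` (discrete Grönwall) gives the bound.
-/

open Finset
open scoped NNReal

theorem le_sum_Icc_pow_mul_of_le_mul_add {e d : ℕ → ℝ} {c : ℝ} (hc : 0 ≤ c) (he0 : e 0 = 0)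
    (hstep : ∀ k, e (k + 1) ≤ c * e k + d (k + 1)) (j : ℕ) :
    e j ≤ ∑ k ∈ Icc 1 j, c ^ (j - k) * d k := by
  have := discrete_gronwall_prod_general (u := e) (c := fun _ => c) (b := fun k => d (k + 1))
    (fun n _ => hstep n) (fun _ _ => hc) (Nat.zero_le j)
  simp only [he0, zero_mul, zero_add, prod_const, Nat.card_Ico] at this
  refine this.trans_eq ?_
  rw [sum_Ico_add' (f := fun k => d k * c ^ (j - k)), zero_add, Ico_add_one_right_eq_Icc]
  exact sum_congr rfl fun k _ => mul_comm _ _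

theorem EuclideanSpace.norm_le_mul_of_forall_abs_le {ι : Type*} [Fintype ι]
    {u v : EuclideanSpace ℝ ι} {c : ℝ} (hc : 0 ≤ c) (h : ∀ i, |u i| ≤ c * |v i|) :
    ‖u‖ ≤ c * ‖v‖ := by
  rw [EuclideanSpace.norm_eq, EuclideanSpace.norm_eq, ← Real.sqrt_sq hc,
    ← Real.sqrt_mul (sq_nonneg c), mul_sum]
  gcongr with i
  rw [← mul_pow, Real.norm_eq_abs, Real.norm_eq_abs]
  exact pow_le_pow_left₀ (abs_nonneg _) (h i) 2

theorem LipschitzWith.norm_sub_le_of_coordwise {ι : Type*} [Fintype ι] {g : ℝ → ℝ} {L : ℝ≥0}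
    (hg : LipschitzWith L g) {a b u v : EuclideanSpace ℝ ι} (hu : ∀ i, u i = g (a i))
    (hv : ∀ i, v i = g (b i)) : ‖u - v‖ ≤ L * ‖a - b‖ :=
  EuclideanSpace.norm_le_mul_of_forall_abs_le L.coe_nonneg fun i => by
    simpa only [PiLp.sub_apply, hu, hv, Real.dist_eq] using hg.dist_le_mul (a i) (b i)

theorem ContinuousLinearMap.norm_affine_sub_le {𝕜 E F : Type*} [NontriviallyNormedField 𝕜]
    [SeminormedAddCommGroup E] [NormedSpace 𝕜 E] [SeminormedAddCommGroup F] [NormedSpace 𝕜 F]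
    (W W' : E →L[𝕜] F) (U U' : F →L[𝕜] F) (x : E) (h h' : F) :
    ‖(W' x + U' h') - (W x + U h)‖ ≤ ‖U'‖ * ‖h' - h‖ + ‖W' - W‖ * ‖x‖ + ‖U' - U‖ * ‖h‖ := by
  have hsplit : (W' x + U' h') - (W x + U h) = U' (h' - h) + (W' - W) x + (U' - U) h := by
    simp only [map_sub, sub_apply]
    abel
  rw [hsplit]
  refine norm_add₃_le.trans ?_
  gcongr <;> exact le_opNorm _ _

theorem rnn_unrolled_perturbation_bound_general
    (L : ℝ≥0) (g : ℝ → ℝ) (hg : LipschitzWith L g)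
    (L' D : ℕ)
    (W ΔW : Matrix (Fin L') (Fin D) ℝ) (U ΔU : Matrix (Fin L') (Fin L') ℝ)
    (x : ℕ → EuclideanSpace ℝ (Fin D))
    (h h' : ℕ → EuclideanSpace ℝ (Fin L'))
    (h0 : h 0 = 0) (h'0 : h' 0 = 0)
    (hrec : ∀ k i, h (k + 1) i =
      g ((Matrix.toEuclideanLin W (x (k + 1)) + Matrix.toEuclideanLin U (h k)) i))
    (h'rec : ∀ k i, h' (k + 1) i =
      g ((Matrix.toEuclideanLin (W + ΔW) (x (k + 1))
            + Matrix.toEuclideanLin (U + ΔU) (h' k)) i))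
    (j : ℕ) :
    ‖h' j - h j‖ ≤ (L : ℝ) *
      ∑ k ∈ Finset.Icc 1 j,
        ((L : ℝ) * ‖LinearMap.toContinuousLinearMap (Matrix.toEuclideanLin (U + ΔU))‖)
            ^ (j - k) *
          (‖LinearMap.toContinuousLinearMap (Matrix.toEuclideanLin ΔW)‖ * ‖x k‖
            + ‖LinearMap.toContinuousLinearMap (Matrix.toEuclideanLin ΔU)‖ * ‖h (k - 1)‖) := by
  set T := fun {m n : ℕ} (M : Matrix (Fin m) (Fin n) ℝ) =>
    LinearMap.toContinuousLinearMap (Matrix.toEuclideanLin M)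
  have hT : ∀ {m n : ℕ} (M N : Matrix (Fin m) (Fin n) ℝ), T (M + N) - T M = T N := by
    intro m n M N
    simp only [T, map_add, add_sub_cancel_left]
  have hstep : ∀ k, ‖h' (k + 1) - h (k + 1)‖ ≤ L * ‖T (U + ΔU)‖ * ‖h' k - h k‖
      + L * (‖T ΔW‖ * ‖x (k + 1)‖ + ‖T ΔU‖ * ‖h (k + 1 - 1)‖) := by
    intro k
    have hact := hg.norm_sub_le_of_coordwise (h'rec k) (hrec k)
    have hpre := (T W).norm_affine_sub_le (T (W + ΔW)) (T U) (T (U + ΔU)) (x (k + 1)) (h k) (h' k)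
    rw [hT, hT] at hpre
    rw [Nat.add_sub_cancel, mul_assoc, ← mul_add]
    exact hact.trans (by gcongr; exact hpre.trans_eq (add_assoc ..))
  have := le_sum_Icc_pow_mul_of_le_mul_add (e := fun k => ‖h' k - h k‖)
    (d := fun k => L * (‖T ΔW‖ * ‖x k‖ + ‖T ΔU‖ * ‖h (k - 1)‖)) (by positivity)
    (by simp [h0, h'0]) hstep j
  simpa only [mul_sum, mul_left_comm (L : ℝ)] using this

/-- Unrolled weight-perturbation bound for RNN hidden states: with an `L`-Lipschitz
activation `g`, `g(0) = 0`, hidden states `h_k` driven by weights `(W, U)` and `h′_k`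
driven by the perturbed weights `(W+ΔW, U+ΔU)` (both started at `0`), one has
`‖h′_j − h_j‖ ≤ L Σ_{k=1}^{j} (L ‖U+ΔU‖_op)^{j−k} (‖ΔW‖_op ‖x_k‖ + ‖ΔU‖_op ‖h_{k−1}‖)`. -/
theorem rnn_unrolled_perturbation_bound
    (L : ℝ≥0) (g : ℝ → ℝ) (hg : LipschitzWith L g) (hg0 : g 0 = 0)
    (L' D J : ℕ)
    (W ΔW : Matrix (Fin L') (Fin D) ℝ) (U ΔU : Matrix (Fin L') (Fin L') ℝ)
    (x : ℕ → EuclideanSpace ℝ (Fin D))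
    (h h' : ℕ → EuclideanSpace ℝ (Fin L'))
    (h0 : h 0 = 0) (h'0 : h' 0 = 0)
    (hrec : ∀ k i, h (k + 1) i =
      g ((Matrix.toEuclideanLin W (x (k + 1)) + Matrix.toEuclideanLin U (h k)) i))
    (h'rec : ∀ k i, h' (k + 1) i =
      g ((Matrix.toEuclideanLin (W + ΔW) (x (k + 1))
            + Matrix.toEuclideanLin (U + ΔU) (h' k)) i))
    (j : ℕ) (hj1 : 1 ≤ j) (hjJ : j ≤ J) :
    ‖h' j - h j‖ ≤ (L : ℝ) *
      ∑ k ∈ Finset.Icc 1 j,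
        ((L : ℝ) * ‖LinearMap.toContinuousLinearMap (Matrix.toEuclideanLin (U + ΔU))‖)
            ^ (j - k) *
          (‖LinearMap.toContinuousLinearMap (Matrix.toEuclideanLin ΔW)‖ * ‖x k‖
            + ‖LinearMap.toContinuousLinearMap (Matrix.toEuclideanLin ΔU)‖ * ‖h (k - 1)‖) :=
  rnn_unrolled_perturbation_bound_general L g hg L' D W ΔW U ΔU x h h' h0 h'0 hrec h'rec j
end
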